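/- Let D be an edge set with u,v connected in G−D, and let P = π_{G−D}(u,v). Let c be a vertex such that π(u,c) contains an edge of D, and let p be a vertex on π(u,c) with p ≠ c such that no vertex of V(D) lies strictly between p and c on π(u,c). If the maximal prefix of P all of whose edges lie in T_induced is nonempty with last edge e_Δ, then e_Δ is not an edge of the subpath of π(u,c) from p to c. -/

import Mathlib

/-! The prefix `Q` of `P` with edges in `T_induced` is a path from `u` made of edges of `T_u`,
hence it is the tree path `π(u,t)` to its endpoint `t`. If its last edge `e_Δ` lay on the
segment `S` of `π(u,c)` from `p` to `c`, then `t ∈ S` and `π(u,c)` is `Q` followed by the part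
of `S` beyond `t`. The `D`-edge of `π(u,c)` avoids `Q ⊆ G − D`, so it lies on `S`; as no
interior vertex of `S` touches `D`, it is `pc` and `S` is that single edge. Then `e_Δ ∈ D`,
contradicting `Q ⊆ G − D`. -/

open SimpleGraph

variable {V : Type*}

/-- Total weight of a walk with respect to edge weights `w`. -/
def walkWeight (w : Sym2 V → ℝ) {G : SimpleGraph V} {a b : V} (p : G.Walk a b) : ℝ :=
  (p.edges.map w).sum

/-- `p` is the/a minimum-weight path from `a` to `b` in `G`. -/
def IsShortestPath (w : Sym2 V → ℝ) (G : SimpleGraph V) {a b : V} (p : G.Walk a b) : Prop :=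
  p.IsPath ∧ ∀ q : G.Walk a b, q.IsPath → walkWeight w p ≤ walkWeight w q

/-- `Decomposable w G k p` : `p` is the concatenation of at most `k+1` shortest paths
of `G` interleaved with at most `k` single edges. -/
inductive Decomposable (w : Sym2 V → ℝ) (G : SimpleGraph V) :
    ℕ → ∀ {a b : V}, G.Walk a b → Prop
  | single {a b : V} (k : ℕ) (p : G.Walk a b) (hp : IsShortestPath w G p) :
      Decomposable w G k p
  | cons {a b c d : V} (k : ℕ) (p : G.Walk a b) (h : G.Adj b c) (q : G.Walk c d)
      (hp : IsShortestPath w G p) (hq : Decomposable w G k q) :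
      Decomposable w G (k + 1) (p.append (Walk.cons h q))

/-- The rank of a walk `p` in `G`: the least `k` such that `p` is `k`-decomposable. -/
noncomputable def pathRank (w : Sym2 V → ℝ) (G : SimpleGraph V) {a b : V} (p : G.Walk a b) : ℕ :=
  sInf {k | Decomposable w G k p}

namespace SimpleGraph.Walk

variable {G : SimpleGraph V}

lemma IsPath.eq_cons_of_mk_mem_edges {y z b : V} {p : G.Walk y b} (hp : p.IsPath)
    (he : s(y, z) ∈ p.edges) : ∃ (h : G.Adj y z) (q : G.Walk z b), p = cons h q := by
  cases p with
  | nil => simp at he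
  | cons h q =>
    rcases List.mem_cons.mp he with he | he
    · obtain rfl : z = _ := Sym2.congr_right.mp he
      exact ⟨h, q, rfl⟩
    · exact absurd (q.fst_mem_support_of_mem_edges he) ((cons_isPath_iff h q).mp hp).2

lemma IsPath.edges_eq_singleton_of_mk_mem_edges {a b : V} {p : G.Walk a b} (hp : p.IsPath)
    (he : s(a, b) ∈ p.edges) : p.edges = [s(a, b)] := by
  obtain ⟨h, q, rfl⟩ := hp.eq_cons_of_mk_mem_edges he
  obtain rfl := (isPath_iff_nil.mp ((cons_isPath_iff h q).mp hp).1).eq_nil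
  rfl

lemma IsPath.edges_eq_singleton_of_interior_disjoint {D : Set (Sym2 V)} {a b : V}
    {p : G.Walk a b} (hp : p.IsPath)
    (hint : ∀ z ∈ p.support, z ≠ a → z ≠ b → ¬∃ f ∈ D, z ∈ f)
    {f : Sym2 V} (hf : f ∈ p.edges) (hfD : f ∈ D) : p.edges = [f] := by
  have hend : ∀ z ∈ f, z = a ∨ z = b := fun z hz => by
    by_contra! h
    exact hint z (p.mem_support_of_mem_edges hf hz) h.1 h.2 ⟨f, hfD, hz⟩
  induction f using Sym2.ind with
  | _ x y =>
  have hxy : x ≠ y := (p.adj_of_mem_edges hf).ne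
  have hf' : s(x, y) = s(a, b) := by
    rcases hend x (Sym2.mem_mk_left x y) with rfl | rfl <;>
      rcases hend y (Sym2.mem_mk_right x y) with rfl | rfl <;>
      first | exact absurd rfl hxy | rfl | exact Sym2.eq_swap
  rw [hf'] at hf ⊢
  exact hp.edges_eq_singleton_of_mk_mem_edges hf

end SimpleGraph.Walk

section ShortestPaths

variable {G : SimpleGraph V} {w : Sym2 V → ℝ}

lemma walkWeight_append {a b c : V} (p : G.Walk a b) (q : G.Walk b c) :
    walkWeight w (p.append q) = walkWeight w p + walkWeight w q := by
  simp [walkWeight, Walk.edges_append]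

lemma isShortestPath_nil {a : V} : IsShortestPath w G (Walk.nil : G.Walk a a) :=
  ⟨Walk.IsPath.nil, fun q hq => by rw [(Walk.isPath_iff_nil.mp hq).eq_nil]⟩

variable [DecidableEq V]

/-- Bypassing a walk does not increase its weight when weights are nonnegative. -/
lemma IsShortestPath.walkWeight_le (hw : ∀ e ∈ G.edgeSet, 0 ≤ w e) {a b : V}
    {p : G.Walk a b} (hp : IsShortestPath w G p) (q : G.Walk a b) :
    walkWeight w p ≤ walkWeight w q :=
  (hp.2 q.bypass q.bypass_isPath).trans <|
    (q.edges_bypass_sublist_edges.map w).sum_le_sum fun _ hx => by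
      obtain ⟨e, he, rfl⟩ := List.mem_map.mp hx
      exact hw e (q.edges_subset_edgeSet he)

lemma IsShortestPath.of_append_left (hw : ∀ e ∈ G.edgeSet, 0 ≤ w e) {a m b : V}
    {p : G.Walk a m} {q : G.Walk m b} (h : IsShortestPath w G (p.append q)) :
    IsShortestPath w G p := by
  refine ⟨h.1.of_append_left, fun r _ => ?_⟩
  have := h.walkWeight_le hw (r.append q)
  rw [walkWeight_append, walkWeight_append] at this
  linarith

lemma IsShortestPath.takeUntil (hw : ∀ e ∈ G.edgeSet, 0 ≤ w e) {a b x : V}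
    {p : G.Walk a b} (hp : IsShortestPath w G p) (hx : x ∈ p.support) :
    IsShortestPath w G (p.takeUntil x hx) :=
  of_append_left hw (q := p.dropUntil x hx) (by rwa [p.take_spec hx])

/-- By uniqueness `p` is the part of `q` before `y`, and `yz` is the next edge of `q`. -/
lemma IsShortestPath.concat_of_mk_mem_edges (hw : ∀ e ∈ G.edgeSet, 0 ≤ w e) {u : V}
    (huniq : ∀ (b : V) (p q : G.Walk u b),
      IsShortestPath w G p → IsShortestPath w G q → p = q)
    {y z a : V} {p : G.Walk u y}
    (hp : IsShortestPath w G p) (h : G.Adj y z) (hz : z ∉ p.support) {q : G.Walk u a}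
    (hq : IsShortestPath w G q) (he : s(y, z) ∈ q.edges) :
    IsShortestPath w G (p.concat h) := by
  have hy : y ∈ q.support := q.fst_mem_support_of_mem_edges he
  have htake : q.takeUntil y hy = p := huniq _ _ _ (hq.takeUntil hw hy) hp
  have hdrop : s(y, z) ∈ (q.dropUntil y hy).edges := by
    rw [← q.take_spec hy, Walk.edges_append, List.mem_append, htake] at he
    exact he.resolve_left fun he => hz (p.snd_mem_support_of_mem_edges he)
  obtain ⟨h', r, hr⟩ := (hq.1.dropUntil hy).eq_cons_of_mk_mem_edges hdrop
  have hqsplit : q = (p.concat h).append r := by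
    rw [← q.take_spec hy, hr, htake, Walk.concat_append]
  exact of_append_left hw (q := r) (hqsplit ▸ hq)

lemma isShortestPath_of_forall_mem_edges (hw : ∀ e ∈ G.edgeSet, 0 ≤ w e) {u : V}
    (huniq : ∀ (b : V) (p q : G.Walk u b),
      IsShortestPath w G p → IsShortestPath w G q → p = q)
    (π : ∀ a, G.Walk u a) (hπ : ∀ a, IsShortestPath w G (π a)) {z : V} (Q : G.Walk u z)
    (hQ : Q.IsPath) (hQe : ∀ e ∈ Q.edges, ∃ a, e ∈ (π a).edges) :
    IsShortestPath w G Q := by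
  induction Q using Walk.concatRec with
  | Hnil => exact isShortestPath_nil
  | Hconcat p h ih =>
    rw [Walk.edges_concat, List.concat_eq_append] at hQe
    obtain ⟨hpPath, hz⟩ := (Walk.concat_isPath_iff h).mp hQ
    have hp : IsShortestPath w G p :=
      ih huniq π hπ hpPath fun e he => hQe e (List.mem_append_left _ he)
    obtain ⟨a, ha⟩ := hQe _ (List.mem_append_right _ (List.mem_singleton_self _))
    exact hp.concat_of_mk_mem_edges hw huniq h hz (hπ a) ha

lemma IsShortestPath.mem_edges_dropUntil_of_not_mem_edges (hw : ∀ e ∈ G.edgeSet, 0 ≤ w e)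
    {u t : V}
    (huniq : ∀ p q : G.Walk u t, IsShortestPath w G p → IsShortestPath w G q → p = q)
    {c x : V} {W : G.Walk u c} (hW : IsShortestPath w G W) (hx : x ∈ W.support)
    (ht : t ∈ (W.dropUntil x hx).support) {Q : G.Walk u t} (hQ : IsShortestPath w G Q)
    {f : Sym2 V} (hf : f ∈ W.edges) (hfQ : f ∉ Q.edges) : f ∈ (W.dropUntil x hx).edges := by
  set S := W.dropUntil x hx
  have hsplit : ((W.takeUntil x hx).append (S.takeUntil t ht)).append (S.dropUntil t ht) = W := by
    rw [← Walk.append_assoc, S.take_spec ht, W.take_spec hx]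
  have hprefix : (W.takeUntil x hx).append (S.takeUntil t ht) = Q :=
    huniq _ _ (of_append_left hw (hsplit ▸ hW)) hQ
  rw [← hsplit, hprefix, Walk.edges_append, List.mem_append] at hf
  exact S.edges_dropUntil_subset_edges ht (hf.resolve_left hfQ)

end ShortestPaths

theorem stmt12_general [DecidableEq V] (G : SimpleGraph V) (w : Sym2 V → ℝ)
    (hw : ∀ e ∈ G.edgeSet, 0 < w e)
    (πG : ∀ a b : V, G.Walk a b) (hπG : ∀ a b : V, IsShortestPath w G (πG a b))
    (huniqG : ∀ (a b : V) (p q : G.Walk a b),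
      IsShortestPath w G p → IsShortestPath w G q → p = q)
    (D : Set (Sym2 V))
    (u v : V)
    (P : (G.deleteEdges D).Walk u v) (hP : IsShortestPath w (G.deleteEdges D) P)
    (c : V)
    -- π(u,c) contains an edge of D
    (hc : ∃ e ∈ (πG u c).edges, e ∈ D)
    (p : V)
    -- p lies on π(u,c)
    (hp : p ∈ (πG u c).support)
    -- no vertex of V(D) lies strictly between p and c on π(u,c)
    (hbetween : ∀ z ∈ ((πG u c).dropUntil p hp).support, z ≠ p → z ≠ c →
      ¬∃ f ∈ D, z ∈ f) :
    let Tind : Sym2 V → Prop := fun e =>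
      ∃ a : V, ((∃ f ∈ D, a ∈ f) ∨ a = u) ∧ ∃ b : V, ((∃ f ∈ D, b ∈ f) ∨ b = u) ∧
        Xor' (e ∈ (πG u a).edges) (e ∈ (πG u b).edges)
    let pre : List (Sym2 V) :=
      P.edges.takeWhile fun e => @decide (Tind e) (Classical.propDecidable _)
    ∀ hne : pre ≠ [], pre.getLast hne ∉ ((πG u c).dropUntil p hp).edges := by
  intro Tind pre hne hmem
  have hw' : ∀ e ∈ G.edgeSet, 0 ≤ w e := fun e he => (hw e he).le
  have hpre : pre <+: P.edges := List.takeWhile_prefix _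
  have hpreD : ∀ e ∈ pre, e ∉ D := fun e he =>
    ((G.edgeSet_deleteEdges D ▸ P.edges_subset_edgeSet (hpre.subset he)) : e ∈ G.edgeSet \ D).2
  have hpreT : ∀ e ∈ pre, ∃ a, e ∈ (πG u a).edges := fun e he => by
    obtain ⟨a, -, b, -, hab⟩ : Tind e := @of_decide_eq_true _ (Classical.propDecidable _) <|
      List.mem_takeWhile_imp (p := fun e => @decide (Tind e) (Classical.propDecidable _)) he
    exact hab.elim (fun h => ⟨a, h.1⟩) (fun h => ⟨b, h.1⟩)
  set Q := (P.mapLe (G.deleteEdges_le D)).take pre.length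
  have hQ : Q.edges = pre := by
    rw [Walk.edges_take, Walk.edges_mapLe_eq_edges, ← List.prefix_iff_eq_take.mp hpre]
  have hQshort : IsShortestPath w G Q :=
    isShortestPath_of_forall_mem_edges hw' (huniqG u) (πG u) (hπG u) Q
      ((hP.1.mapLe _).take _) (by rwa [hQ])
  have hlast : pre.getLast hne = s(Q.penultimate, _) :=
    (List.getLast_congr hne (by rwa [hQ]) hQ.symm).trans
      (Walk.getLast_edges_eq_mk_penultimate_end _)
  have ht := ((πG u c).dropUntil p hp).snd_mem_support_of_mem_edges (hlast ▸ hmem)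
  obtain ⟨f, hfW, hfD⟩ := hc
  have hfS := (hπG u c).mem_edges_dropUntil_of_not_mem_edges hw' (huniqG u _) hp ht hQshort hfW
    fun hfQ => hpreD f (hQ ▸ hfQ) hfD
  rw [((hπG u c).1.dropUntil hp).edges_eq_singleton_of_interior_disjoint hbetween hfS hfD,
    List.mem_singleton] at hmem
  exact hpreD _ (List.getLast_mem hne) (hmem ▸ hfD)

/-- Claim 4.3.  Let `P = π_{G−D}(u,v)`.  Let `c` be a vertex such that
`π(u,c)` contains an edge of `D`, and let `p ≠ c` be a vertex on `π(u,c)` such that no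
vertex of `V(D)` lies strictly between `p` and `c` on `π(u,c)`.  If the maximal prefix of
`P` all of whose edges lie in `T_induced` is nonempty with last edge `e_Δ`, then `e_Δ` is
not an edge of the subpath of `π(u,c)` from `p` to `c`. -/
theorem stmt12 [Fintype V] [DecidableEq V] (G : SimpleGraph V) (w : Sym2 V → ℝ)
    (hw : ∀ e ∈ G.edgeSet, 0 < w e)
    (πG : ∀ a b : V, G.Walk a b) (hπG : ∀ a b : V, IsShortestPath w G (πG a b))
    (huniqG : ∀ (a b : V) (p q : G.Walk a b),
      IsShortestPath w G p → IsShortestPath w G q → p = q)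
    (D : Set (Sym2 V)) (hDsub : D ⊆ G.edgeSet)
    (huniqD : ∀ (a b : V) (p q : (G.deleteEdges D).Walk a b),
      IsShortestPath w (G.deleteEdges D) p → IsShortestPath w (G.deleteEdges D) q → p = q)
    (u v : V)
    (P : (G.deleteEdges D).Walk u v) (hP : IsShortestPath w (G.deleteEdges D) P)
    (c : V)
    -- π(u,c) contains an edge of D
    (hc : ∃ e ∈ (πG u c).edges, e ∈ D)
    (p : V) (hpc : p ≠ c)
    -- p lies on π(u,c)
    (hp : p ∈ (πG u c).support)
    -- no vertex of V(D) lies strictly between p and c on π(u,c)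
    (hbetween : ∀ z ∈ ((πG u c).dropUntil p hp).support, z ≠ p → z ≠ c →
      ¬∃ f ∈ D, z ∈ f) :
    let Tind : Sym2 V → Prop := fun e =>
      ∃ a : V, ((∃ f ∈ D, a ∈ f) ∨ a = u) ∧ ∃ b : V, ((∃ f ∈ D, b ∈ f) ∨ b = u) ∧
        Xor' (e ∈ (πG u a).edges) (e ∈ (πG u b).edges)
    let pre : List (Sym2 V) :=
      P.edges.takeWhile fun e => @decide (Tind e) (Classical.propDecidable _)
    ∀ hne : pre ≠ [], pre.getLast hne ∉ ((πG u c).dropUntil p hp).edges :=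
  stmt12_general G w hw πG hπG huniqG D u v P hP c hc p hp hbetween
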